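/- arXiv:1707.05020 — 8 statements merged into one kernel-verified Lean document; each statement's English description precedes it below -/
import Mathlib

section
/- (Motsch–Tadmor lemma) Let S be a real N×N skew-symmetric matrix with |S_{ij}| ≤ M for all i,j, and let u, w ∈ ℝ^N have nonnegative entries. Set Ū = (1/N)Σ_i u_i and W̄ = (1/N)Σ_i w_i. Then (1/N²)|⟨Su, w⟩| ≤ M( Ū·W̄ − (1/N²) Σ_{i,j=1}^N min(u_i w_j, u_j w_i) ). -/
open scoped BigOperators
open Finset

theorem motsch_tadmor_lemma (N : ℕ) (hN : 1 ≤ N) (S : Matrix (Fin N) (Fin N) ℝ) (M : ℝ)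
    (hskew : ∀ i j, S i j = - S j i) (hbound : ∀ i j, |S i j| ≤ M)
    (u w : Fin N → ℝ) (hu : ∀ i, 0 ≤ u i) (hw : ∀ i, 0 ≤ w i) :
    (1 / (N : ℝ) ^ 2) * |∑ i, ∑ j, S i j * u j * w i|
      ≤ M * (((1 / (N : ℝ)) * ∑ i, u i) * ((1 / (N : ℝ)) * ∑ i, w i)
          - (1 / (N : ℝ) ^ 2) * ∑ i, ∑ j, min (u i * w j) (u j * w i)) := by
  have hNpos : (0 : ℝ) < (N : ℝ) := by
    exact_mod_cast Nat.lt_of_lt_of_le Nat.zero_lt_one hN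
  have hM : 0 ≤ M := le_trans (abs_nonneg _) (hbound ⟨0, hN⟩ ⟨0, hN⟩)
  set A := ∑ i, ∑ j, S i j * u j * w i with hA
  -- symmetry: A = -∑ i ∑ j S i j * u i * w j
  have hsym : A = ∑ i, ∑ j, -(S i j * u i * w j) := by
    rw [hA, Finset.sum_comm]
    refine Finset.sum_congr rfl fun i _ => Finset.sum_congr rfl fun j _ => ?_
    rw [hskew]; ring
  have h2A : 2 * A = ∑ i, ∑ j, S i j * (u j * w i - u i * w j) := by
    have : 2 * A = A + A := by ring
    rw [this]
    nth_rewrite 2 [hsym]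
    rw [← Finset.sum_add_distrib]
    refine Finset.sum_congr rfl fun i _ => ?_
    rw [← Finset.sum_add_distrib]
    refine Finset.sum_congr rfl fun j _ => ?_
    ring
  -- bound |2A|
  have habs : |2 * A| ≤ ∑ i, ∑ j, M * (max (u i * w j) (u j * w i) - min (u i * w j) (u j * w i)) := by
    rw [h2A]
    calc |∑ i, ∑ j, S i j * (u j * w i - u i * w j)|
        ≤ ∑ i, |∑ j, S i j * (u j * w i - u i * w j)| := Finset.abs_sum_le_sum_abs _ _
      _ ≤ ∑ i, ∑ j, |S i j * (u j * w i - u i * w j)| := by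
          exact Finset.sum_le_sum fun i _ => Finset.abs_sum_le_sum_abs _ _
      _ ≤ ∑ i, ∑ j, M * (max (u i * w j) (u j * w i) - min (u i * w j) (u j * w i)) := by
          refine Finset.sum_le_sum fun i _ => Finset.sum_le_sum fun j _ => ?_
          rw [abs_mul]
          have h1 : |u j * w i - u i * w j| = max (u i * w j) (u j * w i) - min (u i * w j) (u j * w i) := by
            rw [max_comm, min_comm, max_sub_min_eq_abs, abs_sub_comm]
          rw [h1]
          exact mul_le_mul_of_nonneg_right (hbound i j)
            (by simp [sub_nonneg, min_le_max])
  -- sum of max + min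
  have hmaxmin : ∑ i, ∑ j, (max (u i * w j) (u j * w i) + min (u i * w j) (u j * w i))
      = 2 * ((∑ i, u i) * (∑ i, w i)) := by
    have : ∀ i j : Fin N, max (u i * w j) (u j * w i) + min (u i * w j) (u j * w i)
        = u i * w j + u j * w i := fun i j => max_add_min _ _
    simp_rw [this, Finset.sum_add_distrib, ← Finset.sum_mul, ← Finset.mul_sum]
    rw [← Finset.sum_mul]
    ring
  -- key inequality
  have hkey : |A| ≤ M * ((∑ i, u i) * (∑ i, w i) - ∑ i, ∑ j, min (u i * w j) (u j * w i)) := by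
    have h1 : |2 * A| = 2 * |A| := by rw [abs_mul, abs_two]
    have h2 : ∑ i, ∑ j, M * (max (u i * w j) (u j * w i) - min (u i * w j) (u j * w i))
        = M * (2 * ((∑ i, u i) * (∑ i, w i)) - 2 * ∑ i, ∑ j, min (u i * w j) (u j * w i)) := by
      simp_rw [← Finset.mul_sum]
      congr 1
      have := hmaxmin
      simp_rw [Finset.sum_sub_distrib, Finset.sum_add_distrib] at *
      linarith
    rw [h1, h2] at habs
    linarith
  -- conclude
  have hN2 : (0:ℝ) < 1 / (N:ℝ)^2 := by positivity
  have hrhs : M * (((1 / (N : ℝ)) * ∑ i, u i) * ((1 / (N : ℝ)) * ∑ i, w i)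
      - (1 / (N : ℝ) ^ 2) * ∑ i, ∑ j, min (u i * w j) (u j * w i))
      = (1 / (N:ℝ)^2) * (M * ((∑ i, u i) * (∑ i, w i) - ∑ i, ∑ j, min (u i * w j) (u j * w i))) := by
    field_simp
  rw [hrhs]
  exact mul_le_mul_of_nonneg_left hkey (le_of_lt hN2)
end

section
/- Let a_{qi}, a_{pj} ≥ 0 with (1/N)Σ_{j=1}^N a_{pj} = 1 and (1/N)Σ_{i=1}^N a_{qi} = 1, and let v_1,...,v_N, v_p', v_q' ∈ ℝ^d with |v_j − v_i| ≤ D for all i,j and |v_p' − v_q'| ≤ D. If (1/N²) Σ_{i,j=1}^N min(a_{qi} a_{pj}, a_{qj} a_{pi}) ≥ ψ*, then |(1/N²) Σ_{i,j=1}^N a_{qi} a_{pj} ⟨v_j − v_i, v_p' − v_q'⟩| ≤ (1 − ψ*) D². -/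
/-!
Split the weights `w i j = aq i * ap j` into the symmetric part `min (w i j) (w j i)` and a
nonnegative remainder. Since `⟪v j - v i, vp - vq⟫` is antisymmetric in `i, j`, the symmetric part
contributes nothing, and the remainder has total mass at most `(1 - ψs) N²`, while each inner
product is bounded by `D²` by Cauchy–Schwarz.
-/

open scoped BigOperators
open Finset

section Antisymmetric

variable {ι : Type*} [Fintype ι]

theorem sum_sum_mul_eq_zero_of_symm_of_antisymm (m f : ι → ι → ℝ)
    (hm : ∀ i j, m i j = m j i) (hf : ∀ i j, f i j = -f j i) :
    ∑ i, ∑ j, m i j * f i j = 0 := by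
  have hneg : ∑ i, ∑ j, m i j * f i j = -∑ i, ∑ j, m i j * f i j := by
    calc ∑ i, ∑ j, m i j * f i j = ∑ j, ∑ i, m i j * f i j := Finset.sum_comm
      _ = ∑ j, ∑ i, -(m j i * f j i) := by
        refine sum_congr rfl fun j _ => sum_congr rfl fun i _ => ?_
        rw [hm, hf, mul_neg]
      _ = -∑ i, ∑ j, m i j * f i j := by simp only [Finset.sum_neg_distrib]
  linarith

theorem abs_sum_sum_mul_antisymm_le (w f : ι → ι → ℝ) (C : ℝ)
    (hf : ∀ i j, f i j = -f j i) (hfC : ∀ i j, |f i j| ≤ C) :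
    |∑ i, ∑ j, w i j * f i j|
      ≤ (∑ i, ∑ j, w i j - ∑ i, ∑ j, min (w i j) (w j i)) * C := by
  set r : ι → ι → ℝ := fun i j => w i j - min (w i j) (w j i)
  have hr : ∀ i j, 0 ≤ r i j := fun i j => sub_nonneg.mpr (min_le_left _ _)
  have hsymm : ∑ i, ∑ j, min (w i j) (w j i) * f i j = 0 :=
    sum_sum_mul_eq_zero_of_symm_of_antisymm _ f (fun i j => min_comm _ _) hf
  have hsplit : ∑ i, ∑ j, w i j * f i j = ∑ i, ∑ j, r i j * f i j := by
    simp only [r, sub_mul, Finset.sum_sub_distrib, hsymm, sub_zero]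
  calc |∑ i, ∑ j, w i j * f i j| = |∑ i, ∑ j, r i j * f i j| := by rw [hsplit]
    _ ≤ ∑ i, ∑ j, |r i j * f i j| :=
        (abs_sum_le_sum_abs _ _).trans (sum_le_sum fun i _ => abs_sum_le_sum_abs _ _)
    _ ≤ ∑ i, ∑ j, r i j * C := by
        gcongr with i _ j _
        rw [abs_mul, abs_of_nonneg (hr i j)]
        exact mul_le_mul_of_nonneg_left (hfC i j) (hr i j)
    _ = (∑ i, ∑ j, w i j - ∑ i, ∑ j, min (w i j) (w j i)) * C := by
        simp only [r, ← Finset.sum_mul, Finset.sum_sub_distrib]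

end Antisymmetric

theorem abs_real_inner_le_sq {E : Type*} [NormedAddCommGroup E] [InnerProductSpace ℝ E]
    {x y : E} {D : ℝ} (hx : ‖x‖ ≤ D) (hy : ‖y‖ ≤ D) : |inner ℝ x y| ≤ D ^ 2 :=
  calc |inner ℝ x y| ≤ ‖x‖ * ‖y‖ := abs_real_inner_le_norm x y
    _ ≤ D * D := mul_le_mul hx hy (norm_nonneg y) ((norm_nonneg x).trans hx)
    _ = D ^ 2 := (sq D).symm

theorem nonsymmetric_interaction_estimate_general (N d : ℕ) (hN : 1 ≤ N)
    (aq ap : Fin N → ℝ)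
    (hap1 : (1 / (N : ℝ)) * ∑ j, ap j = 1) (haq1 : (1 / (N : ℝ)) * ∑ i, aq i = 1)
    (v : Fin N → EuclideanSpace ℝ (Fin d)) (vp vq : EuclideanSpace ℝ (Fin d))
    (D ψs : ℝ)
    (hv : ∀ i j, ‖v j - v i‖ ≤ D) (hpq : ‖vp - vq‖ ≤ D)
    (hstruct : (1 / (N : ℝ) ^ 2) * ∑ i, ∑ j, min (aq i * ap j) (aq j * ap i) ≥ ψs) :
    |(1 / (N : ℝ) ^ 2) * ∑ i, ∑ j, aq i * ap j * (inner ℝ (v j - v i) (vp - vq) : ℝ)|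
      ≤ (1 - ψs) * D ^ 2 := by
  have hN0 : (N : ℝ) ≠ 0 := by positivity
  have hmass : ∑ i, ∑ j, aq i * ap j = (N : ℝ) ^ 2 := by
    rw [← Finset.sum_mul_sum]
    field_simp at hap1 haq1
    rw [hap1, haq1, sq]
  have hsymm : ψs * (N : ℝ) ^ 2 ≤ ∑ i, ∑ j, min (aq i * ap j) (aq j * ap i) := by
    rwa [ge_iff_le, one_div_mul_eq_div, le_div_iff₀ (by positivity)] at hstruct
  have hbound := abs_sum_sum_mul_antisymm_le (fun i j => aq i * ap j)
    (fun i j => inner ℝ (v j - v i) (vp - vq)) (D ^ 2)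
    (fun i j => by rw [← inner_neg_left, neg_sub])
    (fun i j => abs_real_inner_le_sq (hv i j) hpq)
  rw [abs_mul, abs_of_pos (by positivity), one_div_mul_eq_div, div_le_iff₀ (by positivity)]
  rw [hmass] at hbound
  exact hbound.trans (by nlinarith [sq_nonneg D])

theorem nonsymmetric_interaction_estimate (N d : ℕ) (hN : 1 ≤ N) (hd : 1 ≤ d)
    (aq ap : Fin N → ℝ)
    (haq : ∀ i, 0 ≤ aq i) (hap : ∀ j, 0 ≤ ap j)
    (hap1 : (1 / (N : ℝ)) * ∑ j, ap j = 1) (haq1 : (1 / (N : ℝ)) * ∑ i, aq i = 1)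
    (v : Fin N → EuclideanSpace ℝ (Fin d)) (vp vq : EuclideanSpace ℝ (Fin d))
    (D ψs : ℝ) (hD : 0 ≤ D) (hψs : 0 < ψs)
    (hv : ∀ i j, ‖v j - v i‖ ≤ D) (hpq : ‖vp - vq‖ ≤ D)
    (hstruct : (1 / (N : ℝ) ^ 2) * ∑ i, ∑ j, min (aq i * ap j) (aq j * ap i) ≥ ψs) :
    |(1 / (N : ℝ) ^ 2) * ∑ i, ∑ j, aq i * ap j * (inner ℝ (v j - v i) (vp - vq) : ℝ)|
      ≤ (1 - ψs) * D ^ 2 :=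
  nonsymmetric_interaction_estimate_general N d hN aq ap hap1 haq1 v vp vq D ψs hv hpq hstruct
end

section
/- Let v_1,...,v_N : [−τ̄, ∞) → ℝ^d be C¹, let τ : [0,∞) → [0, τ̄] and suppose 0 ≤ ψ_{ij}(t) ≤ 1 for all i,j,t. If for each i and t > 0, v̇_i(t) = (λ/N) Σ_{j≠i} ψ_{ij}(t−τ(t)) (v_j(t−τ(t)) − v_i(t)), then setting w_i(t) = v_i(t) − (1/N)Σ_k v_k(t), one has for every t > 0: (1/N) Σ_{i=1}^N |v̇_i(t)|² ≤ (4λ²/N) Σ_{i=1}^N |w_i(t)|² + 2λ² τ̄ · (1/N) ∫_{t−τ(t)}^t Σ_{i=1}^N |v̇_i(s)|² ds. -/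
open scoped BigOperators
open Finset MeasureTheory

/-!
Each `v̇ᵢ(t)` is a `λ/N`-weighted sum of the differences `vⱼ(t - τ) - vᵢ(t)`. Replacing the delayed
`vⱼ(t - τ)` by `vⱼ(t)` costs at most `∫_{t-τ}^t |v̇ⱼ|`, whose square is at most `τ̄ ∫_{t-τ}^t |v̇ⱼ|²`
by Cauchy–Schwarz. After squaring with `(a + b)² ≤ 2a² + 2b²` and summing over `i`, the
undelayed part is the pairwise spread `∑ᵢ ∑ⱼ |vⱼ - vᵢ|² = 2N ∑ᵢ |wᵢ|² - 2|∑ᵢ wᵢ|² ≤ 2N ∑ᵢ |wᵢ|²`.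
-/

lemma sq_intervalIntegral_le_mul_intervalIntegral_sq {f : ℝ → ℝ} {a b : ℝ} (hab : a ≤ b)
    (hf : IntervalIntegrable f volume a b)
    (hf2 : IntervalIntegrable (fun x => f x ^ 2) volume a b) :
    (∫ x in a..b, f x) ^ 2 ≤ (b - a) * ∫ x in a..b, f x ^ 2 := by
  -- the quadratic `c ↦ ∫ (f - c)²` is nonnegative, so its discriminant is not positive
  have hquad : ∀ c : ℝ,
      0 ≤ (b - a) * (c * c) + (-2 * ∫ x in a..b, f x) * c + ∫ x in a..b, f x ^ 2 := by
    intro c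
    have hexp : ∫ x in a..b, (f x - c) ^ 2
        = (b - a) * (c * c) + (-2 * ∫ x in a..b, f x) * c + ∫ x in a..b, f x ^ 2 := by
      simp only [sub_sq]
      rw [intervalIntegral.integral_add (hf2.sub ((hf.const_mul 2).mul_const c))
          intervalIntegrable_const, intervalIntegral.integral_sub hf2 ((hf.const_mul 2).mul_const c)]
      simp only [intervalIntegral.integral_const, intervalIntegral.integral_const_mul,
        intervalIntegral.integral_mul_const, smul_eq_mul]
      ring
    rw [← hexp]
    exact intervalIntegral.integral_nonneg hab fun x _ => sq_nonneg _
  have := discrim_le_zero hquad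
  rw [discrim] at this
  linarith

lemma sq_sum_add_le {ι : Type*} (s : Finset ι) (x y : ι → ℝ) :
    (∑ j ∈ s, (x j + y j)) ^ 2 ≤ 2 * #s * (∑ j ∈ s, x j ^ 2 + ∑ j ∈ s, y j ^ 2) :=
  calc (∑ j ∈ s, (x j + y j)) ^ 2 ≤ #s * ∑ j ∈ s, (x j + y j) ^ 2 := sq_sum_le_card_mul_sum_sq
    _ ≤ #s * ∑ j ∈ s, 2 * (x j ^ 2 + y j ^ 2) := by gcongr; exact add_sq_le
    _ = 2 * #s * (∑ j ∈ s, x j ^ 2 + ∑ j ∈ s, y j ^ 2) := by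
        rw [← mul_sum, sum_add_distrib]; ring

section InnerProductSpace

variable {ι E : Type*} [Fintype ι] [NormedAddCommGroup E] [InnerProductSpace ℝ E]

lemma sum_sum_norm_sub_sq_eq (w : ι → E) :
    ∑ i, ∑ j, ‖w j - w i‖ ^ 2 = 2 * Fintype.card ι * ∑ i, ‖w i‖ ^ 2 - 2 * ‖∑ i, w i‖ ^ 2 := by
  have hinner : ∑ i, ∑ j, inner ℝ (w j) (w i) = ‖∑ i, w i‖ ^ 2 := by
    rw [← real_inner_self_eq_norm_sq, sum_inner, sum_comm]
    simp_rw [inner_sum]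
  simp only [norm_sub_sq_real, sum_add_distrib, sum_sub_distrib, ← mul_sum, hinner, sum_const,
    card_univ, nsmul_eq_mul]
  ring

lemma sum_sum_norm_sub_sq_le (w : ι → E) (m : E) :
    ∑ i, ∑ j, ‖w j - w i‖ ^ 2 ≤ 2 * Fintype.card ι * ∑ i, ‖w i - m‖ ^ 2 := by
  have h := sum_sum_norm_sub_sq_eq fun i => w i - m
  simp only [sub_sub_sub_cancel_right] at h
  nlinarith [sq_nonneg ‖∑ i, (w i - m)‖]

end InnerProductSpace

section NormedSpace

variable {ι E : Type*} [NormedAddCommGroup E] [NormedSpace ℝ E]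

lemma norm_sum_smul_le_sum_norm {s t : Finset ι} (hst : s ⊆ t) {c : ι → ℝ}
    (hc : ∀ j ∈ s, |c j| ≤ 1) (z : ι → E) :
    ‖∑ j ∈ s, c j • z j‖ ≤ ∑ j ∈ t, ‖z j‖ :=
  calc ‖∑ j ∈ s, c j • z j‖ ≤ ∑ j ∈ s, ‖c j • z j‖ := norm_sum_le _ _
    _ ≤ ∑ j ∈ s, ‖z j‖ := sum_le_sum fun j hj => by
        rw [norm_smul, Real.norm_eq_abs]
        exact mul_le_of_le_one_left (norm_nonneg _) (hc j hj)
    _ ≤ ∑ j ∈ t, ‖z j‖ := sum_le_sum_of_subset_of_nonneg hst fun _ _ _ => norm_nonneg _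

lemma norm_sub_le_norm_sub_add_integral_norm_deriv {u : ℝ → E} (hu : ContDiff ℝ 1 u) {a t : ℝ}
    (hat : a ≤ t) (x : E) : ‖u a - x‖ ≤ ‖u t - x‖ + ∫ s in a..t, ‖deriv u s‖ :=
  calc ‖u a - x‖ = ‖(u t - x) - (u t - u a)‖ := by rw [sub_sub_sub_cancel_left]
    _ ≤ ‖u t - x‖ + ‖u t - u a‖ := norm_sub_le _ _
    _ ≤ ‖u t - x‖ + ∫ s in a..t, ‖deriv u s‖ := by
        gcongr
        exact norm_sub_le_integral_of_norm_deriv_le_of_le hat hu.continuous.continuousOn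
          (hu.differentiable one_ne_zero).differentiableOn
          (ae_of_all _ fun _ _ => le_rfl)
          ((hu.continuous_deriv le_rfl).norm.intervalIntegrable _ _)

lemma sq_norm_deriv_le_of_delayed_alignment [Fintype ι] {v : ι → ℝ → E}
    (hv : ∀ j, ContDiff ℝ 1 (v j)) {c : ℝ} {ψ : ι → ℝ} (hψ : ∀ j, |ψ j| ≤ 1) {a t : ℝ}
    (hat : a ≤ t) {i : ι} {s : Finset ι}
    (hi : deriv (v i) t = c • ∑ j ∈ s, ψ j • (v j a - v i t)) :
    ‖deriv (v i) t‖ ^ 2 ≤ 2 * c ^ 2 * Fintype.card ι *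
      (∑ j, ‖v j t - v i t‖ ^ 2 + (t - a) * ∫ r in a..t, ∑ j, ‖deriv (v j) r‖ ^ 2) := by
  have hcont : ∀ j, Continuous fun r => ‖deriv (v j) r‖ := fun j =>
    ((hv j).continuous_deriv le_rfl).norm
  have hsq : ∀ j, IntervalIntegrable (fun r => ‖deriv (v j) r‖ ^ 2) volume a t :=
    fun j => ((hcont j).pow 2).intervalIntegrable _ _
  have hdrift : ∀ j, (∫ r in a..t, ‖deriv (v j) r‖) ^ 2
      ≤ (t - a) * ∫ r in a..t, ‖deriv (v j) r‖ ^ 2 := fun j =>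
    sq_intervalIntegral_le_mul_intervalIntegral_sq hat ((hcont j).intervalIntegrable _ _)
      (hsq j)
  have hnorm : ‖deriv (v i) t‖
      ≤ |c| * ∑ j, (‖v j t - v i t‖ + ∫ r in a..t, ‖deriv (v j) r‖) := by
    rw [hi, norm_smul, Real.norm_eq_abs]
    gcongr
    exact (norm_sum_smul_le_sum_norm (subset_univ s) (fun j _ => hψ j) _).trans
      (sum_le_sum fun j _ => norm_sub_le_norm_sub_add_integral_norm_deriv (hv j) hat _)
  calc ‖deriv (v i) t‖ ^ 2
      ≤ c ^ 2 * (∑ j, (‖v j t - v i t‖ + ∫ r in a..t, ‖deriv (v j) r‖)) ^ 2 := by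
        rw [← sq_abs c, ← mul_pow]; gcongr
    _ ≤ c ^ 2 * (2 * Fintype.card ι *
          (∑ j, ‖v j t - v i t‖ ^ 2 + ∑ j, (∫ r in a..t, ‖deriv (v j) r‖) ^ 2)) := by
        gcongr; exact sq_sum_add_le _ _ _
    _ ≤ c ^ 2 * (2 * Fintype.card ι *
          (∑ j, ‖v j t - v i t‖ ^ 2 + (t - a) * ∫ r in a..t, ∑ j, ‖deriv (v j) r‖ ^ 2)) := by
        rw [intervalIntegral.integral_finsetSum fun j _ => hsq j, mul_sum]
        gcongr with j
        exact hdrift j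
    _ = _ := by ring

end NormedSpace

theorem delayed_velocity_derivative_bound_general (N d : ℕ)
    (lam τbar : ℝ)
    (v : Fin N → ℝ → EuclideanSpace ℝ (Fin d)) (hv : ∀ i, ContDiff ℝ 1 (v i))
    (τ : ℝ → ℝ) (hτ : ∀ t, 0 ≤ τ t ∧ τ t ≤ τbar)
    (ψ : Fin N → Fin N → ℝ → ℝ) (hψ : ∀ i j t, 0 ≤ ψ i j t ∧ ψ i j t ≤ 1)
    (hode : ∀ i t, 0 < t → deriv (v i) t
      = (lam / N) • ∑ j ∈ univ.erase i, ψ i j (t - τ t) • (v j (t - τ t) - v i t))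
    (t : ℝ) (ht : 0 < t) :
    (1 / (N : ℝ)) * ∑ i, ‖deriv (v i) t‖ ^ 2
      ≤ (4 * lam ^ 2 / N) * ∑ i, ‖v i t - (1 / (N : ℝ)) • ∑ k, v k t‖ ^ 2
        + 2 * lam ^ 2 * τbar *
          ((1 / (N : ℝ)) * ∫ s in (t - τ t)..t, ∑ i, ‖deriv (v i) s‖ ^ 2) := by
  rcases N.eq_zero_or_pos with rfl | hN
  · simp
  obtain ⟨hτ0, hτle⟩ := hτ t
  set I := ∫ s in (t - τ t)..t, ∑ i, ‖deriv (v i) s‖ ^ 2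
  have hI : 0 ≤ I := intervalIntegral.integral_nonneg (by linarith) fun _ _ => by positivity
  have hagent : ∀ i, ‖deriv (v i) t‖ ^ 2
      ≤ 2 * (lam / N) ^ 2 * N * (∑ j, ‖v j t - v i t‖ ^ 2 + τbar * I) := fun i => by
    have h := sq_norm_deriv_le_of_delayed_alignment hv
      (fun j => abs_le.2 ⟨by linarith [(hψ i j (t - τ t)).1], (hψ i j (t - τ t)).2⟩)
      (by linarith) (hode i t ht)
    rw [Fintype.card_fin, sub_sub_cancel] at h
    exact h.trans (by gcongr)
  have hspread := sum_sum_norm_sub_sq_le (fun i => v i t) ((1 / (N : ℝ)) • ∑ k, v k t)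
  rw [Fintype.card_fin] at hspread
  calc (1 / (N : ℝ)) * ∑ i, ‖deriv (v i) t‖ ^ 2
      ≤ 1 / N * ∑ i, 2 * (lam / N) ^ 2 * N * (∑ j, ‖v j t - v i t‖ ^ 2 + τbar * I) := by
        gcongr with i; exact hagent i
    _ = 2 * (lam / N) ^ 2 * (∑ i, ∑ j, ‖v j t - v i t‖ ^ 2 + N * (τbar * I)) := by
        rw [← mul_sum, sum_add_distrib, sum_const, card_univ, Fintype.card_fin, nsmul_eq_mul]
        field_simp
    _ ≤ 2 * (lam / N) ^ 2 *
          (2 * N * ∑ i, ‖v i t - (1 / (N : ℝ)) • ∑ k, v k t‖ ^ 2 + N * (τbar * I)) := by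
        gcongr
    _ = _ := by field_simp; ring

theorem delayed_velocity_derivative_bound (N d : ℕ) (hN : 1 ≤ N) (hd : 1 ≤ d)
    (lam τbar : ℝ) (hlam : 0 ≤ lam) (hτbar : 0 < τbar)
    (v : Fin N → ℝ → EuclideanSpace ℝ (Fin d)) (hv : ∀ i, ContDiff ℝ 1 (v i))
    (τ : ℝ → ℝ) (hτ : ∀ t, 0 ≤ τ t ∧ τ t ≤ τbar)
    (ψ : Fin N → Fin N → ℝ → ℝ) (hψ : ∀ i j t, 0 ≤ ψ i j t ∧ ψ i j t ≤ 1)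
    (hode : ∀ i t, 0 < t → deriv (v i) t
      = (lam / N) • ∑ j ∈ univ.erase i, ψ i j (t - τ t) • (v j (t - τ t) - v i t))
    (t : ℝ) (ht : 0 < t) :
    (1 / (N : ℝ)) * ∑ i, ‖deriv (v i) t‖ ^ 2
      ≤ (4 * lam ^ 2 / N) * ∑ i, ‖v i t - (1 / (N : ℝ)) • ∑ k, v k t‖ ^ 2
        + 2 * lam ^ 2 * τbar *
          ((1 / (N : ℝ)) * ∫ s in (t - τ t)..t, ∑ i, ‖deriv (v i) s‖ ^ 2) :=
  delayed_velocity_derivative_bound_general N d lam τbar v hv τ hτ ψ hψ hode t ht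
end

section
/- Under the same hypotheses as the preceding lemma, plus the symmetry ψ_{ij} = ψ_{ji} and the structural assumption that for all t > 0 and all w ∈ (ℝ^d)^N with Σ_i w_i = 0 one has ⟨L(t−τ(t)) w, w⟩ ≥ γ ‖w‖² (where L(s) is the Laplacian of the weights ψ_{ij}(s) with coupling λ), the quantity W(t) = (1/N) Σ_{i=1}^N |w_i(t)|² satisfies, for a.e. t > 0: dW/dt(t) ≤ −γ W(t) + (λ² τ̄ / γ) · (1/N) ∫_{t−τ(t)}^t Σ_{i=1}^N |v̇_i(s)|² ds. -/
/-!
Differentiating `W`, the motion of the mean drops out because the deviations `w i` sum to zero,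
and the delayed equation writes `v j (t - τ) - v i t` as `(w j - w i) - ∫_{t-τ}^t v̇ j`.
By symmetry of `ψ` the undelayed part is `-⟨L w, w⟩ ≤ -γ ‖w‖²`. Young's inequality with weight
`γ / τ̄`, integrated over the delay window of length `τ ≤ τ̄`, bounds the delayed part by half of
that dissipation plus `(λ² τ̄ / 2γ) ∫ |v̇ j|²`.
-/

open Finset RealInnerProductSpace intervalIntegral

section Variance

variable {ι E : Type*} [Fintype ι] [NormedAddCommGroup E] [InnerProductSpace ℝ E]

theorem sum_sub_mean_eq_zero (x : ι → E) :
    ∑ i, (x i - (1 / (Fintype.card ι : ℝ)) • ∑ k, x k) = 0 := by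
  rcases isEmpty_or_nonempty ι with hι | hι
  · simp
  rw [sum_sub_distrib, sum_const, card_univ, ← Nat.cast_smul_eq_nsmul ℝ, smul_smul,
    mul_one_div_cancel (by positivity), one_smul, sub_self]

theorem hasDerivAt_sum_norm_sq_sub_mean {u : ι → ℝ → E} {u' : ι → E} {t : ℝ}
    (hu : ∀ i, HasDerivAt (u i) (u' i) t) :
    HasDerivAt (fun s ↦ ∑ i, ‖u i s - (1 / (Fintype.card ι : ℝ)) • ∑ k, u k s‖ ^ 2)
      (2 * ∑ i, ⟪u i t - (1 / (Fintype.card ι : ℝ)) • ∑ k, u k t, u' i⟫) t := by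
  have hmean := (HasDerivAt.fun_sum fun k (_ : k ∈ univ) ↦ hu k).fun_const_smul
    (1 / (Fintype.card ι : ℝ))
  refine (HasDerivAt.fun_sum fun i _ ↦ ((hu i).sub hmean).norm_sq).congr_deriv ?_
  rw [← mul_sum]
  simp only [Pi.sub_apply, inner_sub_right]
  rw [sum_sub_distrib, ← sum_inner, sum_sub_mean_eq_zero, inner_zero_left, sub_zero]

end Variance

section Alignment

variable {ι E : Type*} [Fintype ι] [DecidableEq ι] [NormedAddCommGroup E] [InnerProductSpace ℝ E]

theorem sum_inner_sum_erase_smul_sub {ψ : ι → ι → ℝ} (hψ : ∀ i j, ψ i j = ψ j i) (w : ι → E) :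
    ∑ i, ⟪w i, ∑ j ∈ univ.erase i, ψ i j • (w j - w i)⟫
      = -(∑ i, ∑ j, ψ i j * ‖w i - w j‖ ^ 2) / 2 := by
  have hdiag (i : ι) : ∑ j ∈ univ.erase i, ψ i j • (w j - w i) = ∑ j, ψ i j • (w j - w i) :=
    sum_erase _ (by simp)
  have hswap : ∑ i, ∑ j, ψ i j * ⟪w i, w j - w i⟫ = ∑ i, ∑ j, ψ i j * ⟪w j, w i - w j⟫ := by
    rw [sum_comm]
    simp only [hψ]
  have hpair (i j : ι) : ⟪w i, w j - w i⟫ + ⟪w j, w i - w j⟫ = -‖w i - w j‖ ^ 2 := by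
    rw [← real_inner_self_eq_norm_sq]
    simp only [inner_sub_left, inner_sub_right, real_inner_comm (w i) (w j)]
    ring
  simp only [hdiag, inner_sum, real_inner_smul_right]
  have hdouble : 2 * ∑ i, ∑ j, ψ i j * ⟪w i, w j - w i⟫ = -∑ i, ∑ j, ψ i j * ‖w i - w j‖ ^ 2 := by
    rw [two_mul]
    nth_rw 2 [hswap]
    simp only [← sum_add_distrib, ← mul_add, hpair, ← sum_neg_distrib, mul_neg]
  linarith

theorem sum_inner_delayed_alignment_le [Nonempty ι] {ψ : ι → ι → ℝ} (hψ : ∀ i j, ψ i j = ψ j i)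
    {lam γ : ℝ} (hγ : 0 ≤ γ) {w I : ι → E} {K : ι → ℝ}
    (hcoerc : γ * ∑ i, ‖w i‖ ^ 2
      ≤ lam / (2 * Fintype.card ι) * ∑ i, ∑ j, ψ i j * ‖w i - w j‖ ^ 2)
    (hdelay : ∀ i j, -(lam * (ψ i j * ⟪w i, I j⟫)) ≤ γ / 2 * ‖w i‖ ^ 2 + K j)
    (hK : ∀ j, 0 ≤ K j) :
    ∑ i, ⟪w i, (lam / Fintype.card ι) • ∑ j ∈ univ.erase i, ψ i j • (w j - w i - I j)⟫
      ≤ -(γ / 2) * ∑ i, ‖w i‖ ^ 2 + ∑ j, K j := by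
  have hn : (0 : ℝ) < Fintype.card ι := by exact_mod_cast Fintype.card_pos
  have hsplit : ∑ i, ⟪w i, (lam / Fintype.card ι) • ∑ j ∈ univ.erase i, ψ i j • (w j - w i - I j)⟫
      = lam / Fintype.card ι * (∑ i, ⟪w i, ∑ j ∈ univ.erase i, ψ i j • (w j - w i)⟫)
        + (∑ i, ∑ j ∈ univ.erase i, -(lam * (ψ i j * ⟪w i, I j⟫))) / Fintype.card ι := by
    simp only [real_inner_smul_right, smul_sub, sum_sub_distrib, inner_sub_right, inner_sum,
      mul_sub, sum_neg_distrib, ← mul_sum]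
    ring
  have hdelay_sum : ∑ i, ∑ j ∈ univ.erase i, -(lam * (ψ i j * ⟪w i, I j⟫))
      ≤ Fintype.card ι * (γ / 2 * ∑ i, ‖w i‖ ^ 2 + ∑ j, K j) :=
    calc _ ≤ ∑ i, ∑ j ∈ univ.erase i, (γ / 2 * ‖w i‖ ^ 2 + K j) :=
          sum_le_sum fun i _ ↦ sum_le_sum fun j _ ↦ hdelay i j
      _ ≤ ∑ i, ∑ j, (γ / 2 * ‖w i‖ ^ 2 + K j) :=
          sum_le_sum fun i _ ↦ sum_le_sum_of_subset_of_nonneg (erase_subset _ _)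
            fun j _ _ ↦ add_nonneg (by positivity) (hK j)
      _ = _ := by
          simp only [sum_add_distrib, sum_const, card_univ, nsmul_eq_mul, ← mul_sum]
          ring
  rw [hsplit, sum_inner_sum_erase_smul_sub hψ]
  calc _ = -(lam / (2 * Fintype.card ι) * ∑ i, ∑ j, ψ i j * ‖w i - w j‖ ^ 2)
        + (∑ i, ∑ j ∈ univ.erase i, -(lam * (ψ i j * ⟪w i, I j⟫))) / Fintype.card ι := by ring
    _ ≤ -(γ * ∑ i, ‖w i‖ ^ 2) + (γ / 2 * ∑ i, ‖w i‖ ^ 2 + ∑ j, K j) :=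
        add_le_add (neg_le_neg hcoerc) ((div_le_iff₀' hn).2 hdelay_sum)
    _ = _ := by ring

end Alignment

section DelayIntegral

variable {E : Type*} [NormedAddCommGroup E] {f : ℝ → E} {a b : ℝ}

theorem mul_integral_norm_le [NormedSpace ℝ E] (hf : Continuous f) (hab : a ≤ b) (x c : ℝ)
    {δ : ℝ} (hδ : 0 < δ) :
    x * (c * ∫ s in a..b, ‖f s‖)
      ≤ (b - a) * (δ / 2 * x ^ 2) + c ^ 2 / (2 * δ) * ∫ s in a..b, ‖f s‖ ^ 2 := by
  have hyoung (y : ℝ) : x * (c * y) ≤ δ / 2 * x ^ 2 + c ^ 2 / (2 * δ) * y ^ 2 := by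
    rw [div_mul_eq_mul_div, div_mul_eq_mul_div, div_add_div _ _ two_ne_zero (by positivity),
      le_div_iff₀ (by positivity)]
    nlinarith [sq_nonneg (δ * x - c * y)]
  calc x * (c * ∫ s in a..b, ‖f s‖) = ∫ s in a..b, x * (c * ‖f s‖) := by
        rw [integral_const_mul, integral_const_mul]
    _ ≤ ∫ s in a..b, (δ / 2 * x ^ 2 + c ^ 2 / (2 * δ) * ‖f s‖ ^ 2) :=
        integral_mono_on hab ((by fun_prop : Continuous _).intervalIntegrable _ _)
          ((by fun_prop : Continuous _).intervalIntegrable _ _) fun s _ ↦ hyoung _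
    _ = _ := by
        rw [integral_add intervalIntegrable_const
          ((by fun_prop : Continuous _).intervalIntegrable _ _), integral_const,
          integral_const_mul, smul_eq_mul]

theorem neg_mul_inner_integral_le [InnerProductSpace ℝ E] (hf : Continuous f) (hab : a ≤ b)
    {T γ lam p : ℝ} (hbaT : b - a ≤ T) (hT : 0 < T) (hγ : 0 < γ) (hlam : 0 ≤ lam)
    (hp₀ : 0 ≤ p) (hp₁ : p ≤ 1) (w : E) :
    -(lam * (p * ⟪w, ∫ s in a..b, f s⟫))
      ≤ γ / 2 * ‖w‖ ^ 2 + lam ^ 2 * T / (2 * γ) * ∫ s in a..b, ‖f s‖ ^ 2 :=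
  calc -(lam * (p * ⟪w, ∫ s in a..b, f s⟫))
      ≤ lam * (p * (‖w‖ * ‖∫ s in a..b, f s‖)) := by
        rw [← mul_neg, ← mul_neg]
        gcongr
        exact (neg_le_abs _).trans (abs_real_inner_le_norm _ _)
    _ ≤ lam * (‖w‖ * ∫ s in a..b, ‖f s‖) := by
        gcongr lam * ?_
        refine (mul_le_of_le_one_left (by positivity) hp₁).trans ?_
        gcongr
        exact norm_integral_le_integral_norm hab
    _ = ‖w‖ * (lam * ∫ s in a..b, ‖f s‖) := mul_left_comm _ _ _
    _ ≤ (b - a) * (γ / T / 2 * ‖w‖ ^ 2) + lam ^ 2 / (2 * (γ / T)) * ∫ s in a..b, ‖f s‖ ^ 2 :=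
        mul_integral_norm_le hf hab _ _ (div_pos hγ hT)
    _ ≤ T * (γ / T / 2 * ‖w‖ ^ 2) + lam ^ 2 / (2 * (γ / T)) * ∫ s in a..b, ‖f s‖ ^ 2 := by
        gcongr
    _ = _ := by
        field_simp

end DelayIntegral

theorem delayed_variance_differential_inequality_general (N d : ℕ) (hN : 1 ≤ N)
    (lam τbar γ : ℝ) (hlam : 0 ≤ lam) (hτbar : 0 < τbar) (hγ : 0 < γ)
    (v : Fin N → ℝ → EuclideanSpace ℝ (Fin d)) (hv : ∀ i, ContDiff ℝ 1 (v i))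
    (τ : ℝ → ℝ) (hτ : ∀ t, 0 ≤ τ t ∧ τ t ≤ τbar)
    (ψ : Fin N → Fin N → ℝ → ℝ) (hψ : ∀ i j t, 0 ≤ ψ i j t ∧ ψ i j t ≤ 1)
    (hsym : ∀ i j t, ψ i j t = ψ j i t)
    (hode : ∀ i t, 0 < t → deriv (v i) t
      = (lam / N) • ∑ j ∈ univ.erase i, ψ i j (t - τ t) • (v j (t - τ t) - v i t))
    -- structural assumption: ⟨L(t-τ(t)) w, w⟩ ≥ γ ‖w‖² on zero-mean vectors,
    -- where ⟨L(s) w, w⟩ = (λ/(2N)) Σ_{i,j} ψ_{ij}(s) |w_i - w_j|²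
    (hstruct : ∀ t, 0 < t → ∀ w : Fin N → EuclideanSpace ℝ (Fin d), (∑ i, w i) = 0 →
      (lam / (2 * N)) * ∑ i, ∑ j, ψ i j (t - τ t) * ‖w i - w j‖ ^ 2
        ≥ γ * ∑ i, ‖w i‖ ^ 2)
    (t : ℝ) (ht : 0 < t) :
    deriv (fun s => (1 / (N : ℝ)) * ∑ i, ‖v i s - (1 / (N : ℝ)) • ∑ k, v k s‖ ^ 2) t
      ≤ - γ * ((1 / (N : ℝ)) * ∑ i, ‖v i t - (1 / (N : ℝ)) • ∑ k, v k t‖ ^ 2)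
        + (lam ^ 2 * τbar / γ) *
          ((1 / (N : ℝ)) * ∫ s in (t - τ t)..t, ∑ i, ‖deriv (v i) s‖ ^ 2) := by
  have : Nonempty (Fin N) := ⟨⟨0, hN⟩⟩
  have hcard : (Fintype.card (Fin N) : ℝ) = N := by rw [Fintype.card_fin]
  have hdiff (i : Fin N) : Differentiable ℝ (v i) := (hv i).differentiable one_ne_zero
  have hcont (i : Fin N) : Continuous (deriv (v i)) := (hv i).continuous_deriv_one
  set w : Fin N → EuclideanSpace ℝ (Fin d) := fun i ↦ v i t - (1 / (N : ℝ)) • ∑ k, v k t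
  have hW := ((hasDerivAt_sum_norm_sq_sub_mean fun i ↦ (hdiff i t).hasDerivAt).const_mul
    (1 / (N : ℝ)))
  rw [hcard] at hW
  have hat : t - τ t ≤ t := by linarith [(hτ t).1]
  have hw0 : ∑ i, w i = 0 := by simpa only [hcard] using sum_sub_mean_eq_zero fun i ↦ v i t
  have hdelayed (i j : Fin N) :
      v j (t - τ t) - v i t = w j - w i - ∫ s in (t - τ t)..t, deriv (v j) s := by
    rw [integral_deriv_eq_sub (fun x _ ↦ hdiff j x) ((hcont j).intervalIntegrable _ _)]
    simp only [w]
    abel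
  have henergy := sum_inner_delayed_alignment_le (hsym · · (t - τ t)) hγ.le
    (by rw [hcard]; exact hstruct t ht w hw0)
    (fun i j ↦ neg_mul_inner_integral_le (hcont j) hat (by linarith [(hτ t).2]) hτbar hγ hlam
      (hψ i j _).1 (hψ i j _).2 (w i))
    (fun j ↦ mul_nonneg (by positivity) (integral_nonneg hat fun s _ ↦ by positivity))
  simp only [hcard, ← hdelayed, ← hode _ t ht] at henergy
  rw [← mul_sum] at henergy
  rw [hW.deriv, integral_finsetSum (f := fun i s ↦ ‖deriv (v i) s‖ ^ 2) fun i _ ↦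
    ((hcont i).norm.pow 2).intervalIntegrable _ _]
  have hbound := mul_le_mul_of_nonneg_left henergy (by positivity : (0 : ℝ) ≤ 2 / N)
  simp only [w] at hbound
  refine (Eq.le ?_).trans (hbound.trans (Eq.le ?_)) <;> ring

theorem delayed_variance_differential_inequality (N d : ℕ) (hN : 1 ≤ N) (hd : 1 ≤ d)
    (lam τbar γ : ℝ) (hlam : 0 ≤ lam) (hτbar : 0 < τbar) (hγ : 0 < γ)
    (v : Fin N → ℝ → EuclideanSpace ℝ (Fin d)) (hv : ∀ i, ContDiff ℝ 1 (v i))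
    (τ : ℝ → ℝ) (hτ : ∀ t, 0 ≤ τ t ∧ τ t ≤ τbar)
    (ψ : Fin N → Fin N → ℝ → ℝ) (hψ : ∀ i j t, 0 ≤ ψ i j t ∧ ψ i j t ≤ 1)
    (hsym : ∀ i j t, ψ i j t = ψ j i t)
    (hode : ∀ i t, 0 < t → deriv (v i) t
      = (lam / N) • ∑ j ∈ univ.erase i, ψ i j (t - τ t) • (v j (t - τ t) - v i t))
    -- structural assumption: ⟨L(t-τ(t)) w, w⟩ ≥ γ ‖w‖² on zero-mean vectors,
    -- where ⟨L(s) w, w⟩ = (λ/(2N)) Σ_{i,j} ψ_{ij}(s) |w_i - w_j|²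
    (hstruct : ∀ t, 0 < t → ∀ w : Fin N → EuclideanSpace ℝ (Fin d), (∑ i, w i) = 0 →
      (lam / (2 * N)) * ∑ i, ∑ j, ψ i j (t - τ t) * ‖w i - w j‖ ^ 2
        ≥ γ * ∑ i, ‖w i‖ ^ 2)
    (t : ℝ) (ht : 0 < t) :
    deriv (fun s => (1 / (N : ℝ)) * ∑ i, ‖v i s - (1 / (N : ℝ)) • ∑ k, v k s‖ ^ 2) t
      ≤ - γ * ((1 / (N : ℝ)) * ∑ i, ‖v i t - (1 / (N : ℝ)) • ∑ k, v k t‖ ^ 2)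
        + (lam ^ 2 * τbar / γ) *
          ((1 / (N : ℝ)) * ∫ s in (t - τ t)..t, ∑ i, ‖deriv (v i) s‖ ^ 2) :=
  delayed_variance_differential_inequality_general N d hN lam τbar γ hlam hτbar hγ v hv τ hτ ψ hψ
    hsym hode hstruct t ht
end

section
/- Let λ > 0, γ > 0, c ∈ [0,1), and τ̄ > 0. Define τ₀ = (γ²/(2λ²))·(1−c)/(2λ²+γ²). If τ̄² e^{τ̄} < τ₀, then there exists β > 0 satisfying simultaneously γ/2 − 4βλ²τ̄ > 0 and β(1−c)e^{−τ̄} − λ²τ̄/(2γ) − 2βλ²τ̄² ≥ 0. Conversely, if such β > 0 exists then τ̄² e^{τ̄} < τ₀. -/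
set_option maxHeartbeats 1000000 in


theorem L2_parameter_compatibility (lam γ c τbar : ℝ)
    (hlam : 0 < lam) (hγ : 0 < γ) (hc0 : 0 ≤ c) (hc1 : c < 1) (hτbar : 0 < τbar) :
    (τbar ^ 2 * Real.exp τbar < (γ ^ 2 / (2 * lam ^ 2)) * ((1 - c) / (2 * lam ^ 2 + γ ^ 2)))
      ↔ ∃ β : ℝ, 0 < β ∧
          γ / 2 - 4 * β * lam ^ 2 * τbar > 0 ∧
          β * (1 - c) * Real.exp (-τbar) - lam ^ 2 * τbar / (2 * γ)
            - 2 * β * lam ^ 2 * τbar ^ 2 ≥ 0 := by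
  rw [Real.exp_neg]
  obtain ⟨E, hE, hEdef⟩ : ∃ E : ℝ, 0 < E ∧ Real.exp τbar = E :=
    ⟨_, Real.exp_pos _, rfl⟩
  rw [hEdef]
  have hlam2 : (0:ℝ) < lam ^ 2 := by positivity
  have h1c : (0:ℝ) < 1 - c := by linarith
  have hEE : E * E⁻¹ = 1 := mul_inv_cancel₀ (ne_of_gt hE)
  obtain ⟨K, hKdef⟩ : ∃ K : ℝ, K = (1 - c) * E⁻¹ - 2 * lam ^ 2 * τbar ^ 2 := ⟨_, rfl⟩
  have hrhs :
      (γ ^ 2 / (2 * lam ^ 2)) * ((1 - c) / (2 * lam ^ 2 + γ ^ 2))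
        = γ ^ 2 * (1 - c) / (2 * lam ^ 2 * (2 * lam ^ 2 + γ ^ 2)) := by
    field_simp
  have hden : (0:ℝ) < 2 * lam ^ 2 * (2 * lam ^ 2 + γ ^ 2) := by positivity
  have hKE : γ ^ 2 * K = γ ^ 2 * (1 - c) * E⁻¹ - 2 * γ ^ 2 * lam ^ 2 * τbar ^ 2 := by
    rw [hKdef]; ring
  have hKE' : γ ^ 2 * K * E = γ ^ 2 * (1 - c) - 2 * γ ^ 2 * lam ^ 2 * τbar ^ 2 * E := by
    rw [hKdef]; linear_combination γ ^ 2 * (1 - c) * hEE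
  constructor
  · intro h
    rw [hrhs, lt_div_iff₀ hden] at h
    have h' : (τbar ^ 2 * E * (2 * lam ^ 2 * (2 * lam ^ 2 + γ ^ 2))) * E⁻¹
        < (γ ^ 2 * (1 - c)) * E⁻¹ :=
      mul_lt_mul_of_pos_right h (by positivity)
    have heq : τbar ^ 2 * E * (2 * lam ^ 2 * (2 * lam ^ 2 + γ ^ 2)) * E⁻¹
        = τbar ^ 2 * (2 * lam ^ 2 * (2 * lam ^ 2 + γ ^ 2)) := by
      linear_combination τbar ^ 2 * (2 * lam ^ 2 * (2 * lam ^ 2 + γ ^ 2)) * hEE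
    have h'' : τbar ^ 2 * (2 * lam ^ 2 * (2 * lam ^ 2 + γ ^ 2))
        < γ ^ 2 * (1 - c) * E⁻¹ := by linarith [h', heq.ge, heq.le]
    have hkey : 4 * lam ^ 4 * τbar ^ 2 < γ ^ 2 * K := by
      rw [hKE]; nlinarith [h'']
    have hK : 0 < K := by
      by_contra hKn
      push_neg at hKn
      have h4 : γ ^ 2 * K ≤ 0 := mul_nonpos_of_nonneg_of_nonpos (sq_nonneg γ) hKn
      have h5 : (0:ℝ) < 4 * lam ^ 4 * τbar ^ 2 := by positivity
      linarith
    obtain ⟨L, hLdef⟩ : ∃ L : ℝ, L = lam ^ 2 * τbar / (2 * γ * K) := ⟨_, rfl⟩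
    obtain ⟨U, hUdef⟩ : ∃ U : ℝ, U = γ / (8 * lam ^ 2 * τbar) := ⟨_, rfl⟩
    have hL : 0 < L := by rw [hLdef]; positivity
    have hU : 0 < U := by rw [hUdef]; positivity
    have hLU : L < U := by
      rw [hLdef, hUdef, div_lt_div_iff₀ (by positivity) (by positivity)]
      nlinarith
    refine ⟨(L + U) / 2, by positivity, ?_, ?_⟩
    · have hbU : (L + U) / 2 < U := by linarith
      have hUeq : 4 * U * lam ^ 2 * τbar = γ / 2 := by
        rw [hUdef]; field_simp; ring
      nlinarith
    · have hbL : L ≤ (L + U) / 2 := by linarith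
      have hLK : L * K = lam ^ 2 * τbar / (2 * γ) := by
        rw [hLdef]; field_simp
      have hβK : lam ^ 2 * τbar / (2 * γ) ≤ ((L + U) / 2) * K := by
        rw [← hLK]; exact mul_le_mul_of_nonneg_right hbL (le_of_lt hK)
      have hexpand : ((L + U) / 2) * K
          = (L + U) / 2 * (1 - c) * E⁻¹
            - 2 * ((L + U) / 2) * lam ^ 2 * τbar ^ 2 := by
        rw [hKdef]; ring
      linarith [hβK, hexpand.le, hexpand.ge]
  · rintro ⟨β, hβ, hA, hB⟩
    have hβKeq : β * K = β * (1 - c) * E⁻¹ - 2 * β * lam ^ 2 * τbar ^ 2 := by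
      rw [hKdef]; ring
    have hβK : lam ^ 2 * τbar / (2 * γ) ≤ β * K := by rw [hβKeq]; linarith
    have hpos : (0:ℝ) < lam ^ 2 * τbar / (2 * γ) := by positivity
    have hK : 0 < K := by
      by_contra hKn
      push_neg at hKn
      have : β * K ≤ 0 := mul_nonpos_of_nonneg_of_nonpos hβ.le hKn
      linarith
    have hβU : β * (8 * lam ^ 2 * τbar) < γ := by nlinarith
    have h2 : lam ^ 2 * τbar ≤ 2 * γ * (β * K) := by
      rw [div_le_iff₀ (by positivity)] at hβK; linarith
    have h4 : lam ^ 2 * τbar * (8 * lam ^ 2 * τbar)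
        ≤ 2 * γ * (β * K) * (8 * lam ^ 2 * τbar) :=
      mul_le_mul_of_nonneg_right h2 (by positivity)
    have h5 : (β * (8 * lam ^ 2 * τbar)) * (2 * γ * K) < γ * (2 * γ * K) :=
      mul_lt_mul_of_pos_right hβU (by positivity)
    have hkey : 4 * lam ^ 4 * τbar ^ 2 < γ ^ 2 * K := by nlinarith [h4, h5]
    rw [hrhs, lt_div_iff₀ hden]
    have h3 : 4 * lam ^ 4 * τbar ^ 2 * E < γ ^ 2 * K * E :=
      mul_lt_mul_of_pos_right hkey hE
    nlinarith [h3, hKE'.le, hKE'.ge]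
end

section
/- Let λ > 0, ψ* ∈ (0,1], c ∈ [0,1), τ̄ > 0, and define τ₀ = ((1−c)/λ)·ψ*/(ψ*+2). If τ̄ e^{τ̄} < τ₀, then there exists β > 0 with β τ̄ < ψ* and β(1−c)e^{−τ̄} − 2λ − βτ̄λ ≥ 0; moreover such β exists if and only if 2λτ̄/((1−c)e^{−τ̄} − λτ̄) < ψ* with (1−c)e^{−τ̄} − λτ̄ > 0. -/
/-!
With `D = (1 - c) e^{-τ̄} - λ τ̄`, the second condition on `β` reads `2λ ≤ β D`. It forces `D > 0`,
and then its smallest solution `β = 2λ / D` is the best candidate for `β τ̄ < ψ*`, which gives the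
equivalence. Multiplying out `τ̄ e^{τ̄} < τ₀` gives `2λ τ̄ < D ψ*`, which is that criterion.
-/

open Real

lemma exists_pos_mul_lt_and_le_mul_iff {a t ψ D : ℝ} (ha : 0 < a) (ht : 0 ≤ t) :
    (∃ β, 0 < β ∧ β * t < ψ ∧ a ≤ β * D) ↔ 0 < D ∧ a * t / D < ψ := by
  constructor
  · rintro ⟨β, hβ, hβt, haβ⟩
    have hD : 0 < D := pos_of_mul_pos_right (ha.trans_le haβ) hβ.le
    refine ⟨hD, lt_of_le_of_lt ?_ hβt⟩
    rw [mul_div_right_comm]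
    exact mul_le_mul_of_nonneg_right ((div_le_iff₀ hD).2 haβ) ht
  · rintro ⟨hD, hψ⟩
    exact ⟨a / D, div_pos ha hD, by rwa [div_mul_eq_mul_div], (div_mul_cancel₀ a hD.ne').ge⟩

lemma pos_and_div_lt_of_lt_mul {x D ψ : ℝ} (hx : 0 < x) (hψ : 0 < ψ) (h : x < D * ψ) :
    0 < D ∧ x / D < ψ := by
  have hD : 0 < D := pos_of_mul_pos_left (hx.trans h) hψ.le
  exact ⟨hD, (div_lt_iff₀' hD).2 h⟩

theorem Linfty_parameter_compatibility_general (lam ψs c τbar : ℝ)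
    (hlam : 0 < lam) (hψs0 : 0 < ψs)
    (hτbar : 0 < τbar) :
    (τbar * Real.exp τbar < ((1 - c) / lam) * (ψs / (ψs + 2)) →
      ∃ β : ℝ, 0 < β ∧ β * τbar < ψs ∧
        β * (1 - c) * Real.exp (-τbar) - 2 * lam - β * τbar * lam ≥ 0)
    ∧ ((∃ β : ℝ, 0 < β ∧ β * τbar < ψs ∧
        β * (1 - c) * Real.exp (-τbar) - 2 * lam - β * τbar * lam ≥ 0)
      ↔ ((1 - c) * Real.exp (-τbar) - lam * τbar > 0 ∧
          2 * lam * τbar / ((1 - c) * Real.exp (-τbar) - lam * τbar) < ψs)) := by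
  set D := (1 - c) * exp (-τbar) - lam * τbar
  have hiff : (∃ β : ℝ, 0 < β ∧ β * τbar < ψs ∧
        β * (1 - c) * exp (-τbar) - 2 * lam - β * τbar * lam ≥ 0) ↔
      0 < D ∧ 2 * lam * τbar / D < ψs := by
    rw [← exists_pos_mul_lt_and_le_mul_iff (by positivity) hτbar.le]
    refine exists_congr fun β => and_congr_right fun _ => and_congr_right fun _ => ?_
    constructor <;> intro h <;> linarith
  refine ⟨fun h => hiff.2 (pos_and_div_lt_of_lt_mul (by positivity) hψs0 ?_), hiff⟩
  rw [div_mul_div_comm, lt_div_iff₀ (by positivity)] at h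
  have hexp : exp τbar * exp (-τbar) = 1 := by rw [← exp_add, add_neg_cancel, exp_zero]
  have h' := mul_lt_mul_of_pos_right h (exp_pos (-τbar))
  linear_combination h' - lam * τbar * (ψs + 2) * hexp

theorem Linfty_parameter_compatibility (lam ψs c τbar : ℝ)
    (hlam : 0 < lam) (hψs0 : 0 < ψs) (hψs1 : ψs ≤ 1)
    (hc0 : 0 ≤ c) (hc1 : c < 1) (hτbar : 0 < τbar) :
    (τbar * Real.exp τbar < ((1 - c) / lam) * (ψs / (ψs + 2)) →
      ∃ β : ℝ, 0 < β ∧ β * τbar < ψs ∧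
        β * (1 - c) * Real.exp (-τbar) - 2 * lam - β * τbar * lam ≥ 0)
    ∧ ((∃ β : ℝ, 0 < β ∧ β * τbar < ψs ∧
        β * (1 - c) * Real.exp (-τbar) - 2 * lam - β * τbar * lam ≥ 0)
      ↔ ((1 - c) * Real.exp (-τbar) - lam * τbar > 0 ∧
          2 * lam * τbar / ((1 - c) * Real.exp (-τbar) - lam * τbar) < ψs)) :=
  Linfty_parameter_compatibility_general lam ψs c τbar hlam hψs0 hτbar
end

section
/- Let v_1,...,v_N : [−τ̄, ∞) → ℝ^d be C¹ and suppose that for all t ≥ 0 and each i, v̇_i(t) = (λ/N) Σ_{j≠i} a_{ij}(t−τ(t)) (v_j(t−τ(t)) − v_i(t)) with a_{ij} ≥ 0 and (1/N) Σ_{j≠i} a_{ij}(s) < 1 for all s. Then for every t ≥ 0: max_{j} |v̇_j(t)| ≤ λ d_V(t) + λ ∫_{t−τ(t)}^t max_j |v̇_j(s)| ds, where d_V(t) = max_{i,j} |v_j(t) − v_i(t)|. -/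
/-!
Fix `t` and let `I = ∫_{t-τ(t)}^t max_j |v̇_j|`. By the fundamental theorem of calculus each agent
moves by at most `I` during the delay, so every delayed difference `v_j(t - τ(t)) - v_i(t)` has
norm at most `d_V(t) + I`. The right-hand side of the equation for `v̇_i(t)` is a combination of
these differences with nonnegative weights of total mass `λ · (1/N) Σ_j a_ij < λ`, which gives
`|v̇_i(t)| ≤ λ (d_V(t) + I)` for every `i`.
-/

open scoped BigOperators
open Finset

theorem continuous_of_isGreatest_finite {X ι : Type*} [TopologicalSpace X] [Fintype ι]
    {f : ι → X → ℝ} {M : X → ℝ} (hf : ∀ j, Continuous (f j))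
    (hM : ∀ s, IsGreatest {x : ℝ | ∃ j, x = f j s} (M s)) : Continuous M := by
  refine continuous_iff_continuousAt.2 fun s₀ => ?_
  obtain ⟨j₀, -⟩ := (hM s₀).1
  have hne : (univ : Finset ι).Nonempty := ⟨j₀, mem_univ _⟩
  have hM_eq : M = fun s => univ.sup' hne fun j => f j s := by
    funext s
    refine le_antisymm ?_ (sup'_le _ _ fun j _ => (hM s).2 ⟨j, rfl⟩)
    obtain ⟨j, hj⟩ := (hM s).1
    exact hj ▸ le_sup' (fun j => f j s) (mem_univ j)
  rw [hM_eq]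
  exact (Continuous.finset_sup'_apply hne fun j _ => hf j).continuousAt

theorem norm_sub_le_integral_of_norm_deriv_le {E : Type*} [NormedAddCommGroup E]
    [NormedSpace ℝ E] [CompleteSpace E] {f : ℝ → E} {g : ℝ → ℝ} {a b : ℝ}
    (hf : ContDiff ℝ 1 f) (hab : a ≤ b) (hg : IntervalIntegrable g MeasureTheory.volume a b)
    (hbound : ∀ s ∈ Set.Icc a b, ‖deriv f s‖ ≤ g s) :
    ‖f b - f a‖ ≤ ∫ s in a..b, g s := by
  rw [← intervalIntegral.integral_deriv_eq_sub
    (fun x _ => (hf.differentiable one_ne_zero).differentiableAt)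
    ((hf.continuous_deriv le_rfl).intervalIntegrable _ _)]
  exact intervalIntegral.norm_integral_le_of_norm_le hab
    (Filter.Eventually.of_forall fun s hs => hbound s (Set.Ioc_subset_Icc_self hs)) hg

theorem norm_sum_smul_le_sum_mul {ι E : Type*} [SeminormedAddCommGroup E] [NormedSpace ℝ E]
    {s : Finset ι} {w : ι → ℝ} {x : ι → E} {R : ℝ} (hw : ∀ j ∈ s, 0 ≤ w j)
    (hx : ∀ j ∈ s, ‖x j‖ ≤ R) :
    ‖∑ j ∈ s, w j • x j‖ ≤ (∑ j ∈ s, w j) * R := by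
  rw [sum_mul]
  refine norm_sum_le_of_le s fun j hj => ?_
  rw [norm_smul, Real.norm_of_nonneg (hw j hj)]
  exact mul_le_mul_of_nonneg_left (hx j hj) (hw j hj)

theorem max_velocity_derivative_bound_general (N d : ℕ)
    (lam τbar : ℝ) (hlam : 0 < lam)
    (v : Fin N → ℝ → EuclideanSpace ℝ (Fin d)) (hv : ∀ i, ContDiff ℝ 1 (v i))
    (τ : ℝ → ℝ) (hτ : ∀ t, 0 ≤ τ t ∧ τ t ≤ τbar)
    (a : Fin N → Fin N → ℝ → ℝ) (ha : ∀ i j s, 0 ≤ a i j s)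
    (hnorm : ∀ i s, (1 / (N : ℝ)) * ∑ j ∈ univ.erase i, a i j s < 1)
    (hode : ∀ i t, 0 ≤ t → deriv (v i) t
      = (lam / N) • ∑ j ∈ univ.erase i, a i j (t - τ t) • (v j (t - τ t) - v i t))
    -- dV s = max_{i,j} |v_j(s) - v_i(s)|, Mx s = max_j |v̇_j(s)|
    (dV Mx : ℝ → ℝ)
    (hdV : ∀ s, IsGreatest {x : ℝ | ∃ i j, x = ‖v j s - v i s‖} (dV s))
    (hMx : ∀ s, IsGreatest {x : ℝ | ∃ j, x = ‖deriv (v j) s‖} (Mx s))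
    (t : ℝ) (ht : 0 ≤ t) :
    Mx t ≤ lam * dV t + lam * ∫ s in (t - τ t)..t, Mx s := by
  set I := ∫ s in (t - τ t)..t, Mx s
  have hMx_cont : Continuous Mx :=
    continuous_of_isGreatest_finite (fun j => ((hv j).continuous_deriv le_rfl).norm) hMx
  have hdrift : ∀ j, ‖v j (t - τ t) - v j t‖ ≤ I := fun j => by
    rw [norm_sub_rev]
    exact norm_sub_le_integral_of_norm_deriv_le (hv j) (sub_le_self _ (hτ t).1)
      (hMx_cont.intervalIntegrable _ _) fun s _ => (hMx s).2 ⟨j, rfl⟩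
  have hdelayed : ∀ i j, ‖v j (t - τ t) - v i t‖ ≤ dV t + I := fun i j =>
    calc ‖v j (t - τ t) - v i t‖ ≤ ‖v j (t - τ t) - v j t‖ + ‖v j t - v i t‖ :=
          norm_sub_le_norm_sub_add_norm_sub _ _ _
      _ ≤ dV t + I := by linarith [hdrift j, (hdV t).2 ⟨i, j, rfl⟩]
  obtain ⟨i, hi⟩ := (hMx t).1
  set S := ∑ j ∈ univ.erase i, a i j (t - τ t)
  calc Mx t = lam / N * ‖∑ j ∈ univ.erase i, a i j (t - τ t) • (v j (t - τ t) - v i t)‖ := by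
        rw [hi, hode i t ht, norm_smul, Real.norm_of_nonneg (by positivity)]
    _ ≤ lam / N * (S * (dV t + I)) := by
        gcongr
        exact norm_sum_smul_le_sum_mul (fun j _ => ha i j _) fun j _ => hdelayed i j
    _ = lam * ((1 / N * S) * (dV t + I)) := by ring
    _ ≤ lam * (1 * (dV t + I)) := by
        gcongr
        · exact (norm_nonneg _).trans (hdelayed i i)
        · exact (hnorm i _).le
    _ = lam * dV t + lam * I := by ring

theorem max_velocity_derivative_bound (N d : ℕ) (hN : 1 ≤ N) (hd : 1 ≤ d)
    (lam τbar : ℝ) (hlam : 0 < lam) (hτbar : 0 < τbar)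
    (v : Fin N → ℝ → EuclideanSpace ℝ (Fin d)) (hv : ∀ i, ContDiff ℝ 1 (v i))
    (τ : ℝ → ℝ) (hτ : ∀ t, 0 ≤ τ t ∧ τ t ≤ τbar)
    (a : Fin N → Fin N → ℝ → ℝ) (ha : ∀ i j s, 0 ≤ a i j s)
    (hnorm : ∀ i s, (1 / (N : ℝ)) * ∑ j ∈ univ.erase i, a i j s < 1)
    (hode : ∀ i t, 0 ≤ t → deriv (v i) t
      = (lam / N) • ∑ j ∈ univ.erase i, a i j (t - τ t) • (v j (t - τ t) - v i t))
    -- dV s = max_{i,j} |v_j(s) - v_i(s)|, Mx s = max_j |v̇_j(s)|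
    (dV Mx : ℝ → ℝ)
    (hdV : ∀ s, IsGreatest {x : ℝ | ∃ i j, x = ‖v j s - v i s‖} (dV s))
    (hMx : ∀ s, IsGreatest {x : ℝ | ∃ j, x = ‖deriv (v j) s‖} (Mx s))
    (t : ℝ) (ht : 0 ≤ t) :
    Mx t ≤ lam * dV t + lam * ∫ s in (t - τ t)..t, Mx s :=
  max_velocity_derivative_bound_general N d lam τbar hlam v hv τ hτ a ha hnorm hode dV Mx hdV hMx t
    ht
end

section
/- Let F : ℝ → ℝ be continuous, and define the upper Dini derivative D⁺F(t) = limsup_{h→0⁺} (F(t+h) − F(t))/h. If x_1,...,x_N : ℝ → ℝ^d are differentiable and d_X(t) = max_{i,j} |x_i(t) − x_j(t)|, then for each t, D⁺d_X(t) ≤ max_{i,j} |ẋ_i(t) − ẋ_j(t)|. -/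
open scoped BigOperators
open Filter

/-- Upper Dini derivative: D⁺F(t) = limsup_{h→0⁺} (F(t+h) − F(t))/h. -/
noncomputable def upperDini (F : ℝ → ℝ) (t : ℝ) : ℝ :=
  Filter.limsup (fun h => (F (t + h) - F t) / h) (nhdsWithin 0 (Set.Ioi 0))

lemma norm_slope_tendsto {E : Type*} [NormedAddCommGroup E] [NormedSpace ℝ E]
    {y : ℝ → E} {t : ℝ} (hy : DifferentiableAt ℝ y t) :
    Filter.Tendsto (fun h : ℝ => ‖y (t + h) - y t‖ / h) (nhdsWithin 0 (Set.Ioi 0))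
      (nhds ‖deriv y t‖) := by
  have h1 : Filter.Tendsto (fun h : ℝ => t + h) (nhdsWithin 0 (Set.Ioi 0))
      (nhdsWithin t {t}ᶜ) := by
    apply tendsto_nhdsWithin_of_tendsto_nhds_of_eventually_within
    · have : Filter.Tendsto (fun h : ℝ => t + h) (nhds 0) (nhds (t + 0)) :=
        (continuous_const.add continuous_id).tendsto 0
      simpa using this.mono_left nhdsWithin_le_nhds
    · filter_upwards [self_mem_nhdsWithin] with h hh
      have : (0:ℝ) < h := hh
      simp only [Set.mem_compl_iff, Set.mem_singleton_iff]
      intro hc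
      nlinarith [hc]
  have h2 := (hasDerivAt_iff_tendsto_slope.1 hy.hasDerivAt).comp h1
  have h3 : Filter.Tendsto (fun h : ℝ => ‖slope y t (t + h)‖)
      (nhdsWithin 0 (Set.Ioi 0)) (nhds ‖deriv y t‖) :=
    (continuous_norm.tendsto _).comp h2
  refine h3.congr' ?_
  filter_upwards [self_mem_nhdsWithin] with h hh
  have hpos : (0:ℝ) < h := hh
  rw [slope_def_module]
  simp [norm_smul, abs_of_pos hpos, div_eq_inv_mul]

theorem dini_of_position_diameter (N d : ℕ) (hN : 1 ≤ N) (hd : 1 ≤ d)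
    (x : Fin N → ℝ → EuclideanSpace ℝ (Fin d))
    (hx : ∀ i, Differentiable ℝ (x i))
    (dX : ℝ → ℝ)
    (hdX : ∀ s, IsGreatest {r : ℝ | ∃ i j, r = ‖x i s - x j s‖} (dX s))
    (t : ℝ) (B : ℝ)
    (hB : IsGreatest {r : ℝ | ∃ i j, r = ‖deriv (x i) t - deriv (x j) t‖} B) :
    upperDini dX t ≤ B := by
  have hNe : NeZero N := ⟨by omega⟩
  have hne : (nhdsWithin (0:ℝ) (Set.Ioi 0)).NeBot := nhdsGT_neBot 0
  refine le_of_forall_pos_le_add fun ε hε => ?_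
  have hall : ∀ᶠ h in nhdsWithin (0:ℝ) (Set.Ioi 0),
      ∀ p : Fin N × Fin N,
        ‖(x p.1 (t + h) - x p.2 (t + h)) - (x p.1 t - x p.2 t)‖ / h ≤ B + ε := by
    rw [eventually_all]
    intro p
    have hy : DifferentiableAt ℝ (fun s => x p.1 s - x p.2 s) t :=
      ((hx p.1 t).sub (hx p.2 t))
    have hd' : deriv (fun s => x p.1 s - x p.2 s) t
        = deriv (x p.1) t - deriv (x p.2) t := deriv_sub (hx p.1 t) (hx p.2 t)
    have htd := norm_slope_tendsto hy
    rw [hd'] at htd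
    have hlt : ‖deriv (x p.1) t - deriv (x p.2) t‖ < B + ε :=
      lt_of_le_of_lt (hB.2 ⟨p.1, p.2, rfl⟩) (by linarith)
    exact (htd.eventually_lt_const hlt).mono fun h hh => le_of_lt hh
  have hev : ∀ᶠ h in nhdsWithin (0:ℝ) (Set.Ioi 0),
      (dX (t + h) - dX t) / h ≤ B + ε := by
    filter_upwards [hall, self_mem_nhdsWithin] with h hall hh
    have hpos : (0:ℝ) < h := hh
    obtain ⟨⟨i, j, hij⟩, _⟩ := hdX (t + h)
    have hub0 : ‖x i t - x j t‖ ≤ dX t := (hdX t).2 ⟨i, j, rfl⟩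
    have htri := norm_sub_norm_le (x i (t + h) - x j (t + h)) (x i t - x j t)
    have h1 : dX (t + h) - dX t
        ≤ ‖(x i (t + h) - x j (t + h)) - (x i t - x j t)‖ := by
      rw [hij]; linarith
    calc (dX (t + h) - dX t) / h
        ≤ ‖(x i (t + h) - x j (t + h)) - (x i t - x j t)‖ / h := by
          gcongr
      _ ≤ B + ε := hall (i, j)
  have hlo : ∀ᶠ h in nhdsWithin (0:ℝ) (Set.Ioi 0),
      -(B + ε) ≤ (dX (t + h) - dX t) / h := by
    obtain ⟨⟨i0, j0, hij0⟩, _⟩ := hdX t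
    filter_upwards [hall, self_mem_nhdsWithin] with h hall hh
    have hpos : (0:ℝ) < h := hh
    have hub : ‖x i0 (t + h) - x j0 (t + h)‖ ≤ dX (t + h) := (hdX (t + h)).2 ⟨i0, j0, rfl⟩
    have htri := norm_sub_norm_le (x i0 t - x j0 t) (x i0 (t + h) - x j0 (t + h))
    have h2 : dX t - dX (t + h)
        ≤ ‖(x i0 (t + h) - x j0 (t + h)) - (x i0 t - x j0 t)‖ := by
      rw [hij0, ← norm_neg (x i0 (t + h) - x j0 (t + h) - (x i0 t - x j0 t))]
      simp only [neg_sub]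
      linarith
    have h3 : (dX t - dX (t + h)) / h
        ≤ ‖(x i0 (t + h) - x j0 (t + h)) - (x i0 t - x j0 t)‖ / h := by gcongr
    have h4 := hall (i0, j0)
    have : (dX t - dX (t + h)) / h ≤ B + ε := le_trans h3 h4
    have hne' : (dX t - dX (t + h)) / h = -((dX (t + h) - dX t) / h) := by ring
    linarith [this, hne' ▸ this]
  exact Filter.limsup_le_of_le
    (isCoboundedUnder_le_of_eventually_le _ hlo) hev
end
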